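/- Let p(X) be a monic polynomial and μ ≠ 0 a root of p of multiplicity exactly m. Then the kernel of p(T) restricted to L = span{μ^n, n μ^n, …, n^{m+s} μ^n} is exactly K = span{μ^n, n μ^n, …, n^{m−1} μ^n}, and L decomposes as the direct sum K ⊕ span{n^m μ^n, …, n^{m+s} μ^n}. -/

import Mathlib

open Polynomial

/-- The shift operator `(T y) n = y (n+1)` on complex-valued sequences. -/
def shift : Module.End ℂ (ℕ → ℂ) where
  toFun y := fun n => y (n + 1)
  map_add' _ _ := rfl
  map_smul' _ _ := rfl

/-- The basis sequences `n ↦ n^k μ^n`. -/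
def basisSeq (mu : ℂ) (k : ℕ) : ℕ → ℂ := fun n => (n : ℂ) ^ k * mu ^ n

/-!
On sequences of the form `n ↦ u n * μ ^ n` the operator `T - μ` acts as `μ` times the forward
difference `Δ`, so `(T - μ) ^ k` kills `n ↦ P(n) μ ^ n` exactly when `deg P < k`. In particular
every element of `L` is killed by `(T - μ) ^ (m + s + 1)`, which is coprime to `q`; by Bézout,
`p(T)` and `(T - μ) ^ m` then have the same kernel on `L`. The decomposition of `L` is the linear
independence of the `n ^ k μ ^ n`, i.e. the injectivity of `P ↦ (n ↦ P(n) μ ^ n)`.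
-/

open fwdDiff

theorem fwdDiff_iter_comp_addMonoidHom {M M' G : Type*} [AddCommMonoid M] [AddCommMonoid M']
    [AddCommGroup G] (φ : M →+ M') (h : M) (f : M' → G) (k : ℕ) :
    Δ_[h] ^[k] (f ∘ φ) = Δ_[φ h] ^[k] f ∘ φ := by
  have hsemi : Function.Semiconj (· ∘ φ : (M' → G) → M → G) Δ_[φ h] Δ_[h] := fun g => by
    funext x
    simp [fwdDiff, map_add]
  exact (hsemi.iterate_right k f).symm

theorem Polynomial.fwdDiff_iter_eval_natCast_eq_zero_iff {R : Type*} [CommRing R] [IsDomain R]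
    [CharZero R] (P : R[X]) (k : ℕ) :
    Δ_[1] ^[k] (fun n : ℕ => P.eval (n : R)) = 0 ↔ P.degree < k := by
  have hcast : ∀ j, Δ_[1] ^[j] (fun n : ℕ => P.eval (n : R)) = Δ_[1] ^[j] P.eval ∘ Nat.cast := by
    intro j
    have := fwdDiff_iter_comp_addMonoidHom (Nat.castAddMonoidHom R) 1 P.eval j
    rwa [Nat.coe_castAddMonoidHom, Nat.cast_one] at this
  constructor
  · intro h
    by_contra! hk
    have hP : P ≠ 0 := by rintro rfl; simp at hk
    obtain ⟨j, hj⟩ := Nat.exists_eq_add_of_le (le_natDegree_of_coe_le_degree hk)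
    have hzero : Δ_[1] ^[P.natDegree] (fun n : ℕ => P.eval (n : R)) = 0 := by
      rw [hj, add_comm, Function.iterate_add_apply, h]
      exact Function.iterate_fixed (fwdDiff_const 1 0) j
    have := congrFun hzero 0
    -- but `Δ ^[deg P]` turns `P` into the nonzero constant `P.leadingCoeff * (deg P)!`
    rw [hcast, Function.comp_apply, P.fwdDiff_iter_degree_eq_factorial] at this
    simp [hP, Nat.factorial_ne_zero] at this
  · intro h
    rcases eq_or_ne P 0 with rfl | hP
    · simp only [eval_zero]
      exact Function.iterate_fixed (fwdDiff_const 1 0) k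
    · rw [hcast, fwdDiff_iter_eq_zero_of_degree_lt ((natDegree_lt_iff_degree_lt hP).mpr h)]
      rfl

lemma range_fin_const_add (a n : ℕ) :
    Set.range (fun k : Fin n => a + (k : ℕ)) = Set.Ico a (a + n) := by
  ext k
  simp only [Set.mem_range, Set.mem_Ico]
  constructor
  · rintro ⟨i, rfl⟩
    omega
  · rintro ⟨hak, hkn⟩
    exact ⟨⟨k - a, by omega⟩, by simp only; omega⟩

theorem Polynomial.aeval_mul_apply_eq_zero_iff_of_isCoprime {R M : Type*} [CommRing R]
    [AddCommGroup M] [Module R M] {f : Module.End R M} {a b q : R[X]} (hbq : IsCoprime b q)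
    {y : M} (hy : aeval f b y = 0) : aeval f (a * q) y = 0 ↔ aeval f a y = 0 := by
  obtain ⟨u, v, huv⟩ := hbq
  constructor
  · intro h
    calc aeval f a y = aeval f (u * a * b + v * (a * q)) y := by
          rw [show u * a * b + v * (a * q) = a * (u * b + v * q) by ring, huv, mul_one]
      _ = aeval f (u * a) (aeval f b y) + aeval f v (aeval f (a * q) y) := by
          simp only [map_add, map_mul, LinearMap.add_apply, Module.End.mul_apply]
      _ = 0 := by rw [hy, h, map_zero, map_zero, add_zero]
  · intro h
    rw [mul_comm, map_mul, Module.End.mul_apply, h, map_zero]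

def geomMul (mu : ℂ) (u : ℕ → ℂ) : ℕ → ℂ := fun n => u n * mu ^ n

lemma geomMul_eq_zero_iff {mu : ℂ} (hmu : mu ≠ 0) {u : ℕ → ℂ} : geomMul mu u = 0 ↔ u = 0 := by
  simp [funext_iff, geomMul, hmu]

lemma aeval_X_sub_C_geomMul (mu : ℂ) (u : ℕ → ℂ) :
    aeval shift (X - C mu) (geomMul mu u) = mu • geomMul mu (Δ_[1] u) := by
  funext n
  simp [geomMul, shift, fwdDiff, Algebra.algebraMap_eq_smul_one, pow_succ]
  ring

lemma aeval_X_sub_C_pow_geomMul (mu : ℂ) (u : ℕ → ℂ) (k : ℕ) :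
    aeval shift ((X - C mu) ^ k) (geomMul mu u) = mu ^ k • geomMul mu (Δ_[1] ^[k] u) := by
  induction k with
  | zero => simp
  | succ k ih =>
    rw [pow_succ', map_mul, Module.End.mul_apply, ih, map_smul, aeval_X_sub_C_geomMul, smul_smul,
      pow_succ, Function.iterate_succ_apply']

noncomputable def expPolySeq (mu : ℂ) : ℂ[X] →ₗ[ℂ] ℕ → ℂ where
  toFun P := geomMul mu fun n => P.eval (n : ℂ)
  map_add' P Q := by funext n; simp [geomMul, add_mul]
  map_smul' c P := by funext n; simp [geomMul, mul_assoc]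

lemma expPolySeq_apply (mu : ℂ) (P : ℂ[X]) :
    expPolySeq mu P = geomMul mu fun n => P.eval (n : ℂ) := rfl

lemma expPolySeq_X_pow (mu : ℂ) (k : ℕ) : expPolySeq mu (X ^ k) = basisSeq mu k := by
  funext n
  simp [expPolySeq_apply, geomMul, basisSeq]

lemma ker_aeval_X_sub_C_pow_comp_expPolySeq {mu : ℂ} (hmu : mu ≠ 0) (k : ℕ) :
    LinearMap.ker (aeval shift ((X - C mu) ^ k) ∘ₗ expPolySeq mu) = degreeLT ℂ k := by
  ext P
  rw [LinearMap.mem_ker, LinearMap.comp_apply, mem_degreeLT, expPolySeq_apply,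
    aeval_X_sub_C_pow_geomMul, smul_eq_zero_iff_right (pow_ne_zero k hmu),
    geomMul_eq_zero_iff hmu, fwdDiff_iter_eval_natCast_eq_zero_iff]

lemma ker_expPolySeq {mu : ℂ} (hmu : mu ≠ 0) : LinearMap.ker (expPolySeq mu) = ⊥ := by
  have h := ker_aeval_X_sub_C_pow_comp_expPolySeq hmu 0
  rw [pow_zero, map_one, Module.End.one_eq_id, LinearMap.id_comp] at h
  rw [h, eq_bot_iff]
  intro P hP
  simpa [mem_degreeLT] using hP

lemma linearIndependent_basisSeq {mu : ℂ} (hmu : mu ≠ 0) : LinearIndependent ℂ (basisSeq mu) := by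
  have h : basisSeq mu = expPolySeq mu ∘ basisMonomials ℂ := by
    funext k
    simp [← expPolySeq_X_pow, X_pow_eq_monomial]
  rw [h]
  exact (basisMonomials ℂ).linearIndependent.map' _ (ker_expPolySeq hmu)

lemma span_basisSeq_image_Iio (mu : ℂ) (n : ℕ) :
    Submodule.span ℂ (basisSeq mu '' Set.Iio n) = (degreeLT ℂ n).map (expPolySeq mu) := by
  classical
  rw [degreeLT_eq_span_X_pow, Submodule.map_span, Finset.coe_image, Finset.coe_range,
    Set.image_image]
  simp_rw [expPolySeq_X_pow]

theorem stmt_12_general (mu : ℂ) (hmu : mu ≠ 0) (m : ℕ) (q : Polynomial ℂ)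
    (p : Polynomial ℂ) (hp : p = (X - C mu) ^ m * q)
    (hq : q.eval mu ≠ 0) (s : ℕ)
    (L K M : Submodule ℂ (ℕ → ℂ))
    (hL : L = Submodule.span ℂ (Set.range fun k : Fin (m + s + 1) => basisSeq mu k))
    (hK : K = Submodule.span ℂ (Set.range fun k : Fin m => basisSeq mu k))
    (hM : M = Submodule.span ℂ (Set.range fun k : Fin (s + 1) => basisSeq mu (m + k))) :
    (∀ y ∈ L, ((Polynomial.aeval shift p) y = 0 ↔ y ∈ K)) ∧
    K ⊔ M = L ∧ K ⊓ M = ⊥ := by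
  have hrange (n : ℕ) : Set.range (fun k : Fin n => basisSeq mu k) = basisSeq mu '' Set.Iio n := by
    rw [← Fin.range_val, ← Set.range_comp]
    rfl
  have hrangeM : Set.range (fun k : Fin (s + 1) => basisSeq mu (m + k)) =
      basisSeq mu '' Set.Ico m (m + s + 1) := by
    rw [add_assoc, ← range_fin_const_add, ← Set.range_comp]
    rfl
  rw [hrange] at hL hK
  rw [hrangeM] at hM
  subst hL hK hM
  refine ⟨fun y hy => ?_, ?_, ?_⟩
  · rw [span_basisSeq_image_Iio] at hy ⊢
    obtain ⟨P, hP, rfl⟩ := hy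
    rw [← ker_aeval_X_sub_C_pow_comp_expPolySeq hmu] at hP
    have hcop : IsCoprime ((X - C mu) ^ (m + s + 1)) q :=
      ((irreducible_X_sub_C mu).coprime_iff_not_dvd.mpr (by rwa [dvd_iff_isRoot])).pow_left
    rw [hp, aeval_mul_apply_eq_zero_iff_of_isCoprime hcop hP,
      ← ker_aeval_X_sub_C_pow_comp_expPolySeq hmu, LinearMap.ker_comp, Submodule.map_comap_eq]
    simp only [Submodule.mem_inf, LinearMap.mem_range_self, LinearMap.mem_ker, true_and]
  · rw [← Submodule.span_union, ← Set.image_union, Set.Iio_union_Ico_eq_Iio (by omega)]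
  · exact disjoint_iff.mp ((linearIndependent_basisSeq hmu).disjoint_span_image
      ((Set.Iio_disjoint_Ici le_rfl).mono_right Set.Ico_subset_Ici_self))

theorem stmt_12 (mu : ℂ) (hmu : mu ≠ 0) (m : ℕ) (hm : 1 ≤ m) (q : Polynomial ℂ)
    (p : Polynomial ℂ) (hp : p = (X - C mu) ^ m * q)
    (hmonic : p.Monic) (hq : q.eval mu ≠ 0) (s : ℕ)
    (L K M : Submodule ℂ (ℕ → ℂ))
    (hL : L = Submodule.span ℂ (Set.range fun k : Fin (m + s + 1) => basisSeq mu k))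
    (hK : K = Submodule.span ℂ (Set.range fun k : Fin m => basisSeq mu k))
    (hM : M = Submodule.span ℂ (Set.range fun k : Fin (s + 1) => basisSeq mu (m + k))) :
    (∀ y ∈ L, ((Polynomial.aeval shift p) y = 0 ↔ y ∈ K)) ∧
    K ⊔ M = L ∧ K ⊓ M = ⊥ :=
  stmt_12_general mu hmu m q p hp hq s L K M hL hK hM
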